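/- For r ∈ (0,1) define A₂(a,r) = (−r − log(1−r))·(2 + a + ar) / (r(1+a)(1+ar)²) for a ∈ [0,1]. Then for each fixed r ∈ (0,1) the function a ↦ A₂(a,r) is monotonically decreasing on [0,1], and consequently A₂(a,r) ≥ A₂(1,r) = (3+r)(−r − log(1−r)) / (2r(1+r)²) for all a ∈ [0,1]. -/
import Mathlib


open Set

theorem stmt9 (r : ℝ) (hr : r ∈ Ioo (0:ℝ) 1)
    (A₂ : ℝ → ℝ → ℝ)
    (hA₂ : ∀ a, A₂ a r = (-r - Real.log (1 - r)) * (2 + a + a * r) /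
        (r * (1 + a) * (1 + a * r) ^ 2)) :
    AntitoneOn (fun a => A₂ a r) (Icc 0 1) ∧
    A₂ 1 r = (3 + r) * (-r - Real.log (1 - r)) / (2 * r * (1 + r) ^ 2) ∧
    ∀ a ∈ Icc (0:ℝ) 1, (3 + r) * (-r - Real.log (1 - r)) / (2 * r * (1 + r) ^ 2) ≤ A₂ a r := by
  obtain ⟨hr0, hr1⟩ := hr
  have hC : 0 ≤ -r - Real.log (1 - r) := by
    have := Real.log_le_sub_one_of_pos (by linarith : (0:ℝ) < 1 - r)
    linarith
  have hanti : AntitoneOn (fun a => A₂ a r) (Icc 0 1) := by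
    intro a ha b hb hab
    simp only
    rw [hA₂ a, hA₂ b]
    obtain ⟨ha0, ha1⟩ := ha
    obtain ⟨hb0, hb1⟩ := hb
    have hda : 0 < r * (1 + a) * (1 + a * r) ^ 2 := by positivity
    have hdb : 0 < r * (1 + b) * (1 + b * r) ^ 2 := by positivity
    rw [div_le_div_iff₀ hdb hda]
    have key : (2 + b + b * r) * ((1 + a) * (1 + a * r) ^ 2) ≤
        (2 + a + a * r) * ((1 + b) * (1 + b * r) ^ 2) := by
      have hQ : 0 ≤ (1 + 3*r + 4*a*r + 2*a*r^2 + 2*a^2*r^2)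
          + b*(4*r + 2*r^2 + 2*a*r + 5*a*r^2 + a*r^3 + a^2*r^2 + a^2*r^3)
          + b^2*(2*r^2 + a*r^2 + a*r^3) := by positivity
      nlinarith [mul_nonneg (sub_nonneg.2 hab) hQ]
    nlinarith [mul_le_mul_of_nonneg_left key hC, sq_nonneg (1 + a * r), sq_nonneg (1 + b * r)]
  have hval : A₂ 1 r = (3 + r) * (-r - Real.log (1 - r)) / (2 * r * (1 + r) ^ 2) := by
    rw [hA₂ 1]; ring_nf
  refine ⟨hanti, hval, fun a ha => ?_⟩
  have h1 : (1:ℝ) ∈ Icc (0:ℝ) 1 := by constructor <;> norm_num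
  have := hanti ha h1 ha.2
  simpa [hval] using this
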